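/- arXiv:1110.3539 — 3 statements merged into one kernel-verified Lean document; each statement's English description precedes it below -/
import Mathlib

section
/- Let t be a real number with 1/2 < t < 1 and set α = 2·arccos(t). If c₂ ≥ 0 is a real number satisfying cos²(α/2) = (cosh²(c₂)·sin²(α/2) − 1)·(sin²α/(1−t²) − 1), then cosh²(c₂) = (5t²−1)/((4t²−1)(1−t²)) and c₂ = log((√(5t²−1)+2t²)/√((4t²−1)(1−t²))). -/
/-! With `C = cosh² c₂`, the identities `cos(α/2) = t`, `sin²(α/2) = 1 - t²` and
`sin² α = 4t²(1 - t²)` turn the relation into `t² = (C(1 - t²) - 1)(4t² - 1)`, which is linear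
in `C`. Since `c₂ ≥ 0`, it is recovered from `C` as `log (cosh c₂ + sinh c₂)` with
`cosh c₂ = √C` and `sinh c₂ = √(C - 1)`, and here `C - 1 = 4t⁴ / ((4t² - 1)(1 - t²))`. -/

open Real

lemma sin_two_mul_arccos_sq {t : ℝ} (ht₀ : -1 ≤ t) (ht₁ : t ≤ 1) :
    sin (2 * arccos t) ^ 2 = 4 * t ^ 2 * (1 - t ^ 2) := by
  rw [sin_two_mul, sin_arccos, cos_arccos ht₀ ht₁, mul_pow, mul_pow,
    sq_sqrt (by nlinarith)]
  ring

lemma eq_log_sqrt_cosh_sq_add_sqrt {x : ℝ} (hx : 0 ≤ x) :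
    x = log (√(cosh x ^ 2) + √(cosh x ^ 2 - 1)) := by
  rw [cosh_sq, add_sub_cancel_right, ← cosh_sq, sqrt_sq (cosh_pos x).le,
    sqrt_sq (sinh_nonneg_iff.mpr hx), cosh_add_sinh, log_exp]

lemma eq_log_of_cosh_sq_eq_div {x p q : ℝ} (hx : 0 ≤ x) (hq : 0 < q)
    (h : cosh x ^ 2 = p / q) : x = log ((√p + √(p - q)) / √q) := by
  rw [eq_log_sqrt_cosh_sq_add_sqrt hx, h, div_sub_one hq.ne', sqrt_div' _ hq.le,
    sqrt_div' _ hq.le, add_div]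

theorem segment_c2_formula (t : ℝ) (h0 : 1 / 2 < t) (h1 : t < 1)
    (c₂ : ℝ) (hc₂ : 0 ≤ c₂)
    (heq : cos (2 * arccos t / 2) ^ 2 =
        (Real.cosh c₂ ^ 2 * sin (2 * arccos t / 2) ^ 2 - 1) *
          (sin (2 * arccos t) ^ 2 / (1 - t ^ 2) - 1)) :
    Real.cosh c₂ ^ 2 = (5 * t ^ 2 - 1) / ((4 * t ^ 2 - 1) * (1 - t ^ 2)) ∧
    c₂ = log ((Real.sqrt (5 * t ^ 2 - 1) + 2 * t ^ 2) /
        Real.sqrt ((4 * t ^ 2 - 1) * (1 - t ^ 2))) := by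
  have h4 : 0 < 4 * t ^ 2 - 1 := by nlinarith
  have h1t : 0 < 1 - t ^ 2 := by nlinarith
  have ht₀ : -1 ≤ t := by linarith
  have hquarter : t ^ 2 = (cosh c₂ ^ 2 * (1 - t ^ 2) - 1) * (4 * t ^ 2 - 1) := by
    rw [mul_div_cancel_left₀ (arccos t) two_ne_zero, cos_arccos ht₀ h1.le, sin_arccos,
      sq_sqrt h1t.le, sin_two_mul_arccos_sq ht₀ h1.le, mul_div_cancel_right₀ _ h1t.ne'] at heq
    linarith
  have hC : cosh c₂ ^ 2 = (5 * t ^ 2 - 1) / ((4 * t ^ 2 - 1) * (1 - t ^ 2)) := by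
    rw [eq_div_iff (mul_pos h4 h1t).ne']
    linarith
  refine ⟨hC, ?_⟩
  have hsinh_num : 5 * t ^ 2 - 1 - (4 * t ^ 2 - 1) * (1 - t ^ 2) = (2 * t ^ 2) ^ 2 := by ring
  rw [eq_log_of_cosh_sq_eq_div hc₂ (mul_pos h4 h1t) hC, hsinh_num, sqrt_sq (by positivity)]
end

section
/- Define f : ℝ → ℝ by f(t) = 2·log((√(5t²−1) + 2t²)/((2t−1)(1−t))). Then on the interval (1/2, 1), f attains a strict global minimum at t₀ = 3√5/10; that is, for every t with 1/2 < t < 1 and t ≠ 3√5/10, f(t) > f(3√5/10). -/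
open Real

theorem length_strict_global_minimum (t : ℝ) (h0 : 1 / 2 < t) (h1 : t < 1)
    (ht : t ≠ 3 * Real.sqrt 5 / 10) :
    2 * log ((Real.sqrt (5 * t ^ 2 - 1) + 2 * t ^ 2) / ((2 * t - 1) * (1 - t))) >
      2 * log ((Real.sqrt (5 * (3 * Real.sqrt 5 / 10) ^ 2 - 1) +
          2 * (3 * Real.sqrt 5 / 10) ^ 2) /
        ((2 * (3 * Real.sqrt 5 / 10) - 1) * (1 - 3 * Real.sqrt 5 / 10))) := by
  set s : ℝ := Real.sqrt 5 with hs_def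
  have hs2 : s ^ 2 = 5 := Real.sq_sqrt (by norm_num)
  have hspos : (0:ℝ) < s := Real.sqrt_pos.mpr (by norm_num)
  have hs_gt : (19:ℝ) / 9 < s := by nlinarith
  -- Simplify the inner sqrt on the RHS
  have harg : 5 * (3 * s / 10) ^ 2 - 1 = (s / 2) ^ 2 := by nlinarith
  have hsqrt : Real.sqrt (5 * (3 * s / 10) ^ 2 - 1) = s / 2 := by
    rw [harg]; exact Real.sqrt_sq (by positivity)
  -- RHS argument equals 9 + 4s
  have hden0 : (2 * (3 * s / 10) - 1) * (1 - 3 * s / 10) > 0 := by nlinarith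
  have hB : (Real.sqrt (5 * (3 * s / 10) ^ 2 - 1) + 2 * (3 * s / 10) ^ 2) /
      ((2 * (3 * s / 10) - 1) * (1 - 3 * s / 10)) = 9 + 4 * s := by
    rw [hsqrt]
    rw [div_eq_iff (ne_of_gt hden0)]
    nlinarith
  -- LHS setup
  have hD : (0:ℝ) < (2 * t - 1) * (1 - t) := by nlinarith
  have hr_nn : (0:ℝ) ≤ 5 * t ^ 2 - 1 := by nlinarith
  set r : ℝ := Real.sqrt (5 * t ^ 2 - 1) with hr_def
  have hr2 : r ^ 2 = 5 * t ^ 2 - 1 := Real.sq_sqrt hr_nn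
  have hr0 : 0 < r := Real.sqrt_pos.mpr (by nlinarith)
  have htne : t - 3 * s / 10 ≠ 0 := sub_ne_zero.mpr ht
  have htsq : 0 < (t - 3 * s / 10) ^ 2 := pow_pos (abs_pos.mpr htne) 2 |>.trans_eq (by rw [sq_abs])
  -- key polynomial inequality
  set P : ℝ := (9 + 4 * s) * ((2 * t - 1) * (1 - t)) - 2 * t ^ 2 with hP_def
  have hG : 5 * t ^ 2 - 1 - P ^ 2 =
      (720 + 320 * s) * (t - 1 / 2) * (1 - t) * (t - 3 * s / 10) ^ 2 := by
    rw [hP_def]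
    linear_combination (-216/5 * s * t + 144/5 * s * t ^ 2 + 72/5 * s + 724/5 * t ^ 2
      - 486/5 * t - 64 * t ^ 4 + 82/5) * hs2
  have hGpos : 0 < 5 * t ^ 2 - 1 - P ^ 2 := by
    rw [hG]
    have : (0:ℝ) < (720 + 320 * s) * (t - 1 / 2) * (1 - t) := by nlinarith
    positivity
  have hPr : P < r := by
    rcases le_or_gt P 0 with hP | hP
    · linarith
    · exact lt_of_pow_lt_pow_left₀ 2 hr0.le (by linarith)
  -- main inequality between arguments
  have hmain : 9 + 4 * s < (r + 2 * t ^ 2) / ((2 * t - 1) * (1 - t)) := by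
    rw [lt_div_iff₀ hD]
    have := hPr
    rw [hP_def] at this
    linarith
  have hBpos : (0:ℝ) < 9 + 4 * s := by positivity
  have hlog := Real.log_lt_log hBpos hmain
  rw [hB]
  linarith [hlog]
end

section
/- Define f : (1/2, 1) → ℝ by f(t) = 2·log((√(5t²−1) + 2t²)/((2t−1)(1−t))). Then f is differentiable on (1/2, 1) and t₀ = 3√5/10 is its unique critical point: f′(t) = 0 for t ∈ (1/2, 1) if and only if t = 3√5/10. -/
/-!
With `s = √(5t² - 1)`, `N = s + 2t²` and `D = (2t - 1)(1 - t)`, the derivative of `2 log (N / D)`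
vanishes exactly when `N' D = N D'`. Multiplying by `s` and using `s² = 5t² - 1` turns this into
`2t(3t - 2) s = -10t³ + 9t - 3`. Squaring gives `(20t² - 9) ((2t - 1)(t - 1))² = 0`, so on
`(1/2, 1)` necessarily `t² = 9/20`; conversely at `t = 3√5/10` one has `s = √5/2` and the
equation holds.
-/

open Real

theorem hasDerivAt_log_div {f g : ℝ → ℝ} {f' g' x : ℝ} (hf : HasDerivAt f f' x)
    (hg : HasDerivAt g g' x) (hfx : f x ≠ 0) (hgx : g x ≠ 0) :
    HasDerivAt (fun y => log (f y / g y)) ((f' * g x - f x * g') / (f x * g x)) x := by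
  refine ((hf.div hg hgx).log (div_ne_zero hfx hgx)).congr_deriv ?_
  simp only [Pi.div_apply]
  field_simp

theorem hasDerivAt_sqrt_five_sq_sub_one_add {t : ℝ} (ht : 0 < 5 * t ^ 2 - 1) :
    HasDerivAt (fun t => √(5 * t ^ 2 - 1) + 2 * t ^ 2) (5 * t / √(5 * t ^ 2 - 1) + 4 * t) t := by
  have hsq : HasDerivAt (fun t : ℝ => 5 * t ^ 2 - 1) (10 * t) t := by
    refine (((hasDerivAt_pow 2 t).const_mul (5 : ℝ)).sub_const 1).congr_deriv ?_
    push_cast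
    ring
  refine ((hsq.sqrt ht.ne').add ((hasDerivAt_pow 2 t).const_mul 2)).congr_deriv ?_
  have : √(5 * t ^ 2 - 1) ≠ 0 := (sqrt_pos.mpr ht).ne'
  field_simp
  ring

theorem hasDerivAt_two_mul_sub_one_mul_one_sub (t : ℝ) :
    HasDerivAt (fun t => (2 * t - 1) * (1 - t)) (3 - 4 * t) t := by
  have h := (((hasDerivAt_id t).const_mul (2 : ℝ)).sub_const 1).mul ((hasDerivAt_id t).const_sub 1)
  simp only [id, mul_one] at h
  exact h.congr_deriv (by ring)

section Ioo

variable {t : ℝ} (ht : t ∈ Set.Ioo (1/2 : ℝ) 1)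
include ht

theorem five_sq_sub_one_pos_of_mem_Ioo : 0 < 5 * t ^ 2 - 1 := by
  nlinarith [ht.1]

theorem two_mul_sub_one_mul_one_sub_pos_of_mem_Ioo : 0 < (2 * t - 1) * (1 - t) :=
  mul_pos (by linarith [ht.1]) (by linarith [ht.2])

theorem hasDerivAt_two_mul_log_div : HasDerivAt
    (fun t => 2 * log ((√(5 * t ^ 2 - 1) + 2 * t ^ 2) / ((2 * t - 1) * (1 - t))))
    (2 * (((5 * t / √(5 * t ^ 2 - 1) + 4 * t) * ((2 * t - 1) * (1 - t))
      - (√(5 * t ^ 2 - 1) + 2 * t ^ 2) * (3 - 4 * t))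
      / ((√(5 * t ^ 2 - 1) + 2 * t ^ 2) * ((2 * t - 1) * (1 - t))))) t := by
  have hq := five_sq_sub_one_pos_of_mem_Ioo ht
  have hs := sqrt_pos.mpr hq
  exact (hasDerivAt_log_div (hasDerivAt_sqrt_five_sq_sub_one_add hq)
    (hasDerivAt_two_mul_sub_one_mul_one_sub t) (by positivity)
    (two_mul_sub_one_mul_one_sub_pos_of_mem_Ioo ht).ne').const_mul 2

end Ioo

theorem critical_numerator_eq_zero_iff {t s : ℝ} (hs : 0 < s) (hs2 : s ^ 2 = 5 * t ^ 2 - 1) :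
    (5 * t / s + 4 * t) * ((2 * t - 1) * (1 - t)) - (s + 2 * t ^ 2) * (3 - 4 * t) = 0 ↔
      2 * t * (3 * t - 2) * s = -10 * t ^ 3 + 9 * t - 3 := by
  have hsub : (5 * t / s + 4 * t) * ((2 * t - 1) * (1 - t)) - (s + 2 * t ^ 2) * (3 - 4 * t) =
      (2 * t * (3 * t - 2) * s - (-10 * t ^ 3 + 9 * t - 3)) / s := by
    field_simp
    linear_combination (4 * t - 3) * hs2
  rw [hsub, div_eq_zero_iff, sub_eq_zero, or_iff_left hs.ne']

theorem critical_eq_iff {t : ℝ} (ht : t ∈ Set.Ioo (1/2 : ℝ) 1) :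
    2 * t * (3 * t - 2) * √(5 * t ^ 2 - 1) = -10 * t ^ 3 + 9 * t - 3 ↔ t = 3 * √5 / 10 := by
  have hs2 : √(5 * t ^ 2 - 1) ^ 2 = 5 * t ^ 2 - 1 := sq_sqrt (five_sq_sub_one_pos_of_mem_Ioo ht).le
  have h5 : √5 ^ 2 = 5 := sq_sqrt (by norm_num)
  constructor
  · intro h
    have hfac : (20 * t ^ 2 - 9) * ((2 * t - 1) * (t - 1)) ^ 2 = 0 := by
      linear_combination (2 * t * (3 * t - 2) * √(5 * t ^ 2 - 1) - 10 * t ^ 3 + 9 * t - 3) * h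
        - (2 * t * (3 * t - 2)) ^ 2 * hs2
    have hne : (2 * t - 1) * (t - 1) ≠ 0 :=
      mul_ne_zero (by linarith [ht.1]) (by linarith [ht.2])
    have h20 : (t - 3 * √5 / 10) * (t + 3 * √5 / 10) = 0 := by
      linear_combination (1 / 20) * (mul_eq_zero.mp hfac).resolve_right (pow_ne_zero 2 hne)
        - (9 / 100) * h5
    exact sub_eq_zero.mp ((mul_eq_zero.mp h20).resolve_right
      (by nlinarith [ht.1, sqrt_nonneg 5]))
  · rintro rfl
    have hs : √(5 * (3 * √5 / 10) ^ 2 - 1) = √5 / 2 := by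
      rw [show 5 * (3 * √5 / 10) ^ 2 - 1 = (√5 / 2) ^ 2 by linear_combination (1 / 5) * h5]
      exact sqrt_sq (by positivity)
    rw [hs]
    linear_combination (27 / 50 * √5 - 3 / 5) * h5

theorem unique_critical_point :
    (∀ t ∈ Set.Ioo (1/2 : ℝ) 1,
        DifferentiableAt ℝ (fun t : ℝ => 2 * log ((Real.sqrt (5 * t ^ 2 - 1) + 2 * t ^ 2) /
          ((2 * t - 1) * (1 - t)))) t) ∧
    (∀ t ∈ Set.Ioo (1/2 : ℝ) 1,
        deriv (fun t : ℝ => 2 * log ((Real.sqrt (5 * t ^ 2 - 1) + 2 * t ^ 2) /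
          ((2 * t - 1) * (1 - t)))) t = 0 ↔ t = 3 * Real.sqrt 5 / 10) := by
  refine ⟨fun t ht => (hasDerivAt_two_mul_log_div ht).differentiableAt, fun t ht => ?_⟩
  have hq := five_sq_sub_one_pos_of_mem_Ioo ht
  have hs := sqrt_pos.mpr hq
  have hD := two_mul_sub_one_mul_one_sub_pos_of_mem_Ioo ht
  rw [(hasDerivAt_two_mul_log_div ht).deriv, mul_eq_zero, or_iff_right two_ne_zero,
    div_eq_zero_iff, or_iff_left (by positivity), critical_numerator_eq_zero_iff hs (sq_sqrt hq.le),
    critical_eq_iff ht]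
end
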